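/- Assume ρ(ε) := εL_f/(γ − εγ_A') + L_g/(γ_B − γ) < 1, and for each u₀ ∈ ℝ^n let Φ^ε(·;u₀) be the unique fixed point in C_γ^− of the Lyapunov–Perron map with initial value u₀. Then for all u₀, u₀' ∈ ℝ^n, ‖Φ^ε(·;u₀) − Φ^ε(·;u₀')‖_γ^− ≤ |u₀ − u₀'|/(1 − ρ(ε)). -/

import Mathlib

open MeasureTheory Set Filter

noncomputable section

/-- `ℝ^n` with the Euclidean norm. -/
abbrev Vec (n : ℕ) := EuclideanSpace ℝ (Fin n)

/-- Action of an `n × n` real matrix on `ℝ^n`. -/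
noncomputable def mApply {n : ℕ} (M : Matrix (Fin n) (Fin n) ℝ) (x : Vec n) : Vec n :=
  Matrix.toEuclideanLin M x

/-- The matrix exponential `e^{tA}`. -/
noncomputable def expM {n : ℕ} (A : Matrix (Fin n) (Fin n) ℝ) (t : ℝ) :
    Matrix (Fin n) (Fin n) ℝ :=
  NormedSpace.exp (t • A)

/-- The norm `‖u‖_γ^- = sup_{t ≤ 0} e^{γ t} ‖u t‖` on `C_γ^-`. -/
noncomputable def cNorm {n : ℕ} (γ : ℝ) (u : ℝ → Vec n) : ℝ :=
  sSup ((fun t => Real.exp (γ * t) * ‖u t‖) '' Iic (0:ℝ))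

/-- Membership in the Banach space `C_γ^-`: continuity on `(-∞, 0]` together with
finiteness of the norm `sup_{t ≤ 0} e^{γ t} ‖u t‖`. -/
def memCneg {n : ℕ} (γ : ℝ) (u : ℝ → Vec n) : Prop :=
  ContinuousOn u (Iic 0) ∧
    BddAbove ((fun t => Real.exp (γ * t) * ‖u t‖) '' Iic (0:ℝ))

/-- The `A`-component of the Lyapunov–Perron map:
`K_A^ε(Φ)(t) = e^{εAt} u₀ + ε ∫_0^t e^{εA(t-s)} f(u(s)+η(s), v(s)+ξ(s)) ds`. -/
noncomputable def KA {n : ℕ} (A : Matrix (Fin n) (Fin n) ℝ) (ε : ℝ) (u₀ : Vec n)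
    (f : Vec n → Vec n → Vec n) (η ξ u v : ℝ → Vec n) (t : ℝ) : Vec n :=
  mApply (expM A (ε * t)) u₀ +
    ε • ∫ s in (0:ℝ)..t, mApply (expM A (ε * (t - s))) (f (u s + η s) (v s + ξ s))

/-- The `B`-component of the Lyapunov–Perron map:
`K_B^ε(Φ)(t) = ∫_{-∞}^t e^{B(t-s)} g(u(s)+η(s), v(s)+ξ(s)) ds`. -/
noncomputable def KB {n : ℕ} (B : Matrix (Fin n) (Fin n) ℝ)
    (g : Vec n → Vec n → Vec n) (η ξ u v : ℝ → Vec n) (t : ℝ) : Vec n :=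
  ∫ s in Iic t, mApply (expM B (t - s)) (g (u s + η s) (v s + ξ s))

/-- `(u, v)` is a fixed point of the Lyapunov–Perron map in `C_γ^-`, with forcings
`(η, ξ)` and initial value `u₀` (the fixed-point equations are required on `(-∞, 0]`,
with the improper integral in the `B`-component converging absolutely). -/
def IsLPFixedPt {n : ℕ} (γ : ℝ) (A B : Matrix (Fin n) (Fin n) ℝ) (ε : ℝ)
    (f g : Vec n → Vec n → Vec n) (η ξ : ℝ → Vec n) (u₀ : Vec n)
    (u v : ℝ → Vec n) : Prop :=
  memCneg γ u ∧ memCneg γ v ∧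
    (∀ t ≤ (0:ℝ), u t = KA A ε u₀ f η ξ u v t) ∧
    (∀ t ≤ (0:ℝ),
      IntegrableOn (fun s => mApply (expM B (t - s)) (g (u s + η s) (v s + ξ s)))
          (Iic t) volume ∧
        v t = KB B g η ξ u v t)

/-! Write `Δu = u - u'`, `Δv = v - v'` and `M = ‖Δu‖_γ^- + ‖Δv‖_γ^-`, which is finite since both
fixed points lie in `C_γ^-`. Subtracting the two fixed-point equations, the Lipschitz bounds give
`|Δf(s)|, |Δg(s)| ≤ L e^{-γ s} M`, and the dichotomy estimates for `e^{εAt}` (`t ≤ 0`) and `e^{Bt}`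
(`t ≥ 0`) turn the two Lyapunov–Perron integrals into explicit exponential integrals. This yields
`‖Δu‖_γ^- ≤ |u₀ - u₀'| + εL_f/(γ - εγ_A') M` and `‖Δv‖_γ^- ≤ L_g/(γ_B - γ) M`; adding the two,
`(1 - ρ(ε)) M ≤ |u₀ - u₀'|`. -/

open Real

section Continuity

attribute [local instance] Matrix.linftyOpNormedRing Matrix.linftyOpNormedAlgebra

theorem continuous_expM {n : ℕ} (A : Matrix (Fin n) (Fin n) ℝ) : Continuous (expM A) :=
  NormedSpace.exp_continuous.comp (continuous_id.smul continuous_const)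

end Continuity

theorem continuous_mApply_expM {n : ℕ} (A : Matrix (Fin n) (Fin n) ℝ) :
    Continuous fun p : ℝ × Vec n => mApply (expM A p.1) p.2 := by
  change Continuous fun p : ℝ × Vec n => WithLp.toLp 2 ((expM A p.1).mulVec (WithLp.ofLp p.2))
  have := continuous_expM A
  fun_prop

theorem mApply_sub {n : ℕ} (M : Matrix (Fin n) (Fin n) ℝ) (x y : Vec n) :
    mApply M (x - y) = mApply M x - mApply M y :=
  map_sub _ x y

theorem continuous_uncurry_of_lipschitz {E F G : Type*} [SeminormedAddCommGroup E]
    [SeminormedAddCommGroup F] [SeminormedAddCommGroup G] {f : E → F → G} {L : ℝ} (hL : 0 ≤ L)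
    (hf : ∀ x₁ y₁ x₂ y₂, ‖f x₁ y₁ - f x₂ y₂‖ ≤ L * (‖x₁ - x₂‖ + ‖y₁ - y₂‖)) :
    Continuous (Function.uncurry f) := by
  refine (LipschitzWith.of_dist_le_mul (K := (2 * L).toNNReal) fun p q => ?_).continuous
  have h1 : ‖p.1 - q.1‖ ≤ ‖p - q‖ := norm_fst_le (p - q)
  have h2 : ‖p.2 - q.2‖ ≤ ‖p - q‖ := norm_snd_le (p - q)
  rw [dist_eq_norm, dist_eq_norm, Real.coe_toNNReal _ (by positivity)]
  calc ‖f p.1 p.2 - f q.1 q.2‖ ≤ L * (‖p.1 - q.1‖ + ‖p.2 - q.2‖) := hf _ _ _ _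
    _ ≤ L * (‖p - q‖ + ‖p - q‖) := by gcongr
    _ = 2 * L * ‖p - q‖ := by ring

theorem exp_mul_sub_mul_exp (κ γ r s : ℝ) :
    exp (-κ * (r - s)) * exp (-γ * s) = exp (-κ * r) * exp ((κ - γ) * s) := by
  rw [← exp_add, ← exp_add]; ring_nf

theorem integral_Ioi_exp_mul_sub_mul_exp {κ γ : ℝ} (h : κ < γ) (r : ℝ) :
    ∫ s in Ioi r, exp (-κ * (r - s)) * exp (-γ * s) = exp (-γ * r) / (γ - κ) := by
  simp_rw [exp_mul_sub_mul_exp]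
  rw [integral_const_mul, integral_exp_mul_Ioi (by linarith), mul_div_assoc', mul_neg, ← exp_add,
    neg_div, ← div_neg, neg_sub]
  congr 2; ring

theorem integral_Iic_exp_mul_sub_mul_exp {κ γ : ℝ} (h : γ < κ) (r : ℝ) :
    ∫ s in Iic r, exp (-κ * (r - s)) * exp (-γ * s) = exp (-γ * r) / (κ - γ) := by
  simp_rw [exp_mul_sub_mul_exp]
  rw [integral_const_mul, integral_exp_mul_Iic (by linarith), mul_div_assoc', ← exp_add]
  congr 2; ring

theorem integrableOn_Ioi_exp_mul_sub_mul_exp {κ γ : ℝ} (h : κ < γ) (r : ℝ) :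
    IntegrableOn (fun s => exp (-κ * (r - s)) * exp (-γ * s)) (Ioi r) := by
  simp_rw [exp_mul_sub_mul_exp]
  exact (integrableOn_exp_mul_Ioi (by linarith) r).const_mul _

theorem integrableOn_Iic_exp_mul_sub_mul_exp {κ γ : ℝ} (h : γ < κ) (r : ℝ) :
    IntegrableOn (fun s => exp (-κ * (r - s)) * exp (-γ * s)) (Iic r) := by
  simp_rw [exp_mul_sub_mul_exp]
  exact (integrableOn_exp_mul_Iic (by linarith) r).const_mul _

theorem exp_mul_norm_smul_integral_expM_le {n : ℕ} {A : Matrix (Fin n) (Fin n) ℝ} {γA' : ℝ}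
    (hA : ∀ t ≤ (0:ℝ), ∀ x : Vec n, ‖mApply (expM A t) x‖ ≤ exp (-γA' * t) * ‖x‖)
    {ε γ K r : ℝ} (hε : 0 < ε) (hεγ : ε * γA' < γ) (hK : 0 ≤ K) (hr : r ≤ 0) {F : ℝ → Vec n}
    (hF : ∀ s ∈ Ioc r 0, ‖F s‖ ≤ K * exp (-γ * s)) :
    exp (γ * r) * ‖ε • ∫ s in (0:ℝ)..r, mApply (expM A (ε * (r - s))) (F s)‖ ≤
      ε * K / (γ - ε * γA') := by
  set G : ℝ → ℝ := fun s => K * (exp (-(ε * γA') * (r - s)) * exp (-γ * s))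
  have hG : IntegrableOn G (Ioi r) :=
    (integrableOn_Ioi_exp_mul_sub_mul_exp hεγ r).const_mul K
  have hG0 : ∀ s, 0 ≤ G s := fun s => by positivity
  have hbound : ∀ s ∈ Ioc r 0, ‖mApply (expM A (ε * (r - s))) (F s)‖ ≤ G s := fun s hs =>
    calc ‖mApply (expM A (ε * (r - s))) (F s)‖
        ≤ exp (-γA' * (ε * (r - s))) * ‖F s‖ := hA _ (by nlinarith [hs.1]) _
      _ ≤ exp (-γA' * (ε * (r - s))) * (K * exp (-γ * s)) := by gcongr; exact hF s hs
      _ = G s := by simp only [G]; ring_nf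
  have hint : ‖∫ s in (0:ℝ)..r, mApply (expM A (ε * (r - s))) (F s)‖ ≤
      K * (exp (-γ * r) / (γ - ε * γA')) :=
    calc ‖∫ s in (0:ℝ)..r, mApply (expM A (ε * (r - s))) (F s)‖
        ≤ ∫ s in Ioc r 0, ‖mApply (expM A (ε * (r - s))) (F s)‖ := by
          simpa only [uIoc_of_ge hr] using intervalIntegral.norm_integral_le_integral_norm_uIoc
            (a := 0) (b := r) (f := fun s => mApply (expM A (ε * (r - s))) (F s)) (μ := volume)
      _ ≤ ∫ s in Ioc r 0, G s :=
          integral_mono_of_nonneg (.of_forall fun _ => norm_nonneg _)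
            (hG.mono_set Ioc_subset_Ioi_self)
            ((ae_restrict_iff' measurableSet_Ioc).2 (.of_forall hbound))
      _ ≤ ∫ s in Ioi r, G s :=
          setIntegral_mono_set hG (.of_forall hG0) Ioc_subset_Ioi_self.eventuallyLE
      _ = K * (exp (-γ * r) / (γ - ε * γA')) := by
          rw [integral_const_mul, integral_Ioi_exp_mul_sub_mul_exp hεγ]
  have hexp : exp (γ * r) * exp (-γ * r) = 1 := by
    rw [← exp_add, neg_mul, add_neg_cancel, exp_zero]
  calc exp (γ * r) * ‖ε • ∫ s in (0:ℝ)..r, mApply (expM A (ε * (r - s))) (F s)‖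
      ≤ exp (γ * r) * (ε * (K * (exp (-γ * r) / (γ - ε * γA')))) := by
        rw [norm_smul, Real.norm_of_nonneg hε.le]; gcongr
    _ = ε * K / (γ - ε * γA') := by
        linear_combination ε * K / (γ - ε * γA') * hexp

theorem exp_mul_norm_integral_Iic_expM_le {n : ℕ} {B : Matrix (Fin n) (Fin n) ℝ} {γB : ℝ}
    (hB : ∀ t ≥ (0:ℝ), ∀ y : Vec n, ‖mApply (expM B t) y‖ ≤ exp (-γB * t) * ‖y‖)
    {γ K r : ℝ} (hγ : γ < γB) {F : ℝ → Vec n} (hF : ∀ s ≤ r, ‖F s‖ ≤ K * exp (-γ * s)) :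
    exp (γ * r) * ‖∫ s in Iic r, mApply (expM B (r - s)) (F s)‖ ≤ K / (γB - γ) := by
  have hbound : ∀ s ∈ Iic r, ‖mApply (expM B (r - s)) (F s)‖ ≤
      K * (exp (-γB * (r - s)) * exp (-γ * s)) := fun s hs =>
    calc ‖mApply (expM B (r - s)) (F s)‖
        ≤ exp (-γB * (r - s)) * ‖F s‖ := hB _ (sub_nonneg.2 hs) _
      _ ≤ exp (-γB * (r - s)) * (K * exp (-γ * s)) := by gcongr; exact hF s hs
      _ = K * (exp (-γB * (r - s)) * exp (-γ * s)) := by ring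
  have hint : ‖∫ s in Iic r, mApply (expM B (r - s)) (F s)‖ ≤ K * (exp (-γ * r) / (γB - γ)) := by
    rw [← integral_Iic_exp_mul_sub_mul_exp hγ, ← integral_const_mul]
    exact norm_integral_le_of_norm_le ((integrableOn_Iic_exp_mul_sub_mul_exp hγ r).const_mul K)
      ((ae_restrict_iff' measurableSet_Iic).2 (.of_forall hbound))
  have hexp : exp (γ * r) * exp (-γ * r) = 1 := by
    rw [← exp_add, neg_mul, add_neg_cancel, exp_zero]
  calc exp (γ * r) * ‖∫ s in Iic r, mApply (expM B (r - s)) (F s)‖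
      ≤ exp (γ * r) * (K * (exp (-γ * r) / (γB - γ))) := by gcongr
    _ = K / (γB - γ) := by
        linear_combination K / (γB - γ) * hexp

section WeightedNorm

variable {n : ℕ} {γ : ℝ} {u u' : ℝ → Vec n}

theorem memCneg.sub (hu : memCneg γ u) (hu' : memCneg γ u') : memCneg γ (u - u') := by
  obtain ⟨b, hb⟩ := hu.2
  obtain ⟨b', hb'⟩ := hu'.2
  refine ⟨hu.1.sub hu'.1, b + b', ?_⟩
  rintro _ ⟨t, ht, rfl⟩
  calc exp (γ * t) * ‖(u - u') t‖ ≤ exp (γ * t) * ‖u t‖ + exp (γ * t) * ‖u' t‖ := by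
        rw [← mul_add]; gcongr; exact norm_sub_le _ _
    _ ≤ b + b' := add_le_add (hb ⟨t, ht, rfl⟩) (hb' ⟨t, ht, rfl⟩)

theorem cNorm_nonneg : 0 ≤ cNorm γ u :=
  Real.sSup_nonneg <| by rintro _ ⟨t, -, rfl⟩; positivity

theorem le_cNorm (hu : memCneg γ u) {t : ℝ} (ht : t ≤ 0) : exp (γ * t) * ‖u t‖ ≤ cNorm γ u :=
  le_csSup hu.2 ⟨t, ht, rfl⟩

theorem norm_le_exp_mul_cNorm (hu : memCneg γ u) {t : ℝ} (ht : t ≤ 0) :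
    ‖u t‖ ≤ exp (-γ * t) * cNorm γ u := by
  rw [neg_mul, exp_neg, ← div_eq_inv_mul, le_div_iff₀ (exp_pos _), mul_comm]
  exact le_cNorm hu ht

theorem cNorm_le {C : ℝ} (h : ∀ t ≤ (0:ℝ), exp (γ * t) * ‖u t‖ ≤ C) : cNorm γ u ≤ C :=
  csSup_le (nonempty_Iic.image _) <| by rintro _ ⟨t, ht, rfl⟩; exact h t ht

end WeightedNorm

section FixedPoints

variable {n : ℕ} {γ ε : ℝ} {A B : Matrix (Fin n) (Fin n) ℝ} {f g : Vec n → Vec n → Vec n}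
  {η ξ : ℝ → Vec n} {u₀ u₀' : Vec n} {u v u' v' : ℝ → Vec n}

theorem norm_sub_le_mul_cNorm_add {L : ℝ} (hL : 0 ≤ L)
    (hf : ∀ x₁ y₁ x₂ y₂ : Vec n, ‖f x₁ y₁ - f x₂ y₂‖ ≤ L * (‖x₁ - x₂‖ + ‖y₁ - y₂‖))
    (hu : memCneg γ (u - u')) (hv : memCneg γ (v - v')) {s : ℝ} (hs : s ≤ 0) :
    ‖f (u s + η s) (v s + ξ s) - f (u' s + η s) (v' s + ξ s)‖ ≤
      L * (cNorm γ (u - u') + cNorm γ (v - v')) * exp (-γ * s) := by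
  calc ‖f (u s + η s) (v s + ξ s) - f (u' s + η s) (v' s + ξ s)‖
      ≤ L * (‖(u - u') s‖ + ‖(v - v') s‖) := by
        have h := hf (u s + η s) (v s + ξ s) (u' s + η s) (v' s + ξ s)
        rwa [add_sub_add_right_eq_sub, add_sub_add_right_eq_sub] at h
    _ ≤ L * (exp (-γ * s) * cNorm γ (u - u') + exp (-γ * s) * cNorm γ (v - v')) := by
        gcongr
        exacts [norm_le_exp_mul_cNorm hu hs, norm_le_exp_mul_cNorm hv hs]
    _ = L * (cNorm γ (u - u') + cNorm γ (v - v')) * exp (-γ * s) := by ring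

theorem IsLPFixedPt.sub_fst_eq (hf : Continuous (Function.uncurry f))
    (hη : ContinuousOn η (Iic 0)) (hξ : ContinuousOn ξ (Iic 0))
    (hfix : IsLPFixedPt γ A B ε f g η ξ u₀ u v) (hfix' : IsLPFixedPt γ A B ε f g η ξ u₀' u' v')
    {r : ℝ} (hr : r ≤ 0) :
    u r - u' r = mApply (expM A (ε * r)) (u₀ - u₀') + ε • ∫ s in (0:ℝ)..r,
      mApply (expM A (ε * (r - s))) (f (u s + η s) (v s + ξ s) - f (u' s + η s) (v' s + ξ s)) := by
  have hint : ∀ w z : ℝ → Vec n, memCneg γ w → memCneg γ z → IntervalIntegrable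
      (fun s => mApply (expM A (ε * (r - s))) (f (w s + η s) (z s + ξ s))) volume 0 r := by
    intro w z hw hz
    have hF : ContinuousOn (fun s => f (w s + η s) (z s + ξ s)) (Iic 0) :=
      hf.comp_continuousOn ((hw.1.add hη).prodMk (hz.1.add hξ))
    have hφ : Continuous fun s : ℝ => ε * (r - s) := by fun_prop
    refine ContinuousOn.intervalIntegrable (ContinuousOn.mono (s := Iic 0) ?_ ?_)
    · -- elaborating the composition against the goal directly makes `isDefEq` unfold `expM`
      have h := (continuous_mApply_expM A).comp_continuousOn (hφ.continuousOn.prodMk hF)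
      exact h
    · rw [uIcc_of_ge hr]; exact Icc_subset_Iic_self
  rw [hfix.2.2.1 r hr, hfix'.2.2.1 r hr]
  simp only [KA, mApply_sub]
  rw [intervalIntegral.integral_sub (hint u v hfix.1 hfix.2.1) (hint u' v' hfix'.1 hfix'.2.1),
    smul_sub]
  abel

theorem IsLPFixedPt.sub_snd_eq (hfix : IsLPFixedPt γ A B ε f g η ξ u₀ u v)
    (hfix' : IsLPFixedPt γ A B ε f g η ξ u₀' u' v') {r : ℝ} (hr : r ≤ 0) :
    v r - v' r = ∫ s in Iic r,
      mApply (expM B (r - s)) (g (u s + η s) (v s + ξ s) - g (u' s + η s) (v' s + ξ s)) := by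
  obtain ⟨hI, hv⟩ := hfix.2.2.2 r hr
  obtain ⟨hI', hv'⟩ := hfix'.2.2.2 r hr
  simp only [hv, hv', KB, mApply_sub, integral_sub hI hI']

theorem IsLPFixedPt.cNorm_sub_fst_le {γA' Lf : ℝ}
    (hA : ∀ t ≤ (0:ℝ), ∀ x : Vec n, ‖mApply (expM A t) x‖ ≤ exp (-γA' * t) * ‖x‖)
    (hε : 0 < ε) (hεγ : ε * γA' < γ) (hLf : 0 ≤ Lf)
    (hfLip : ∀ x₁ y₁ x₂ y₂ : Vec n, ‖f x₁ y₁ - f x₂ y₂‖ ≤ Lf * (‖x₁ - x₂‖ + ‖y₁ - y₂‖))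
    (hη : ContinuousOn η (Iic 0)) (hξ : ContinuousOn ξ (Iic 0))
    (hfix : IsLPFixedPt γ A B ε f g η ξ u₀ u v) (hfix' : IsLPFixedPt γ A B ε f g η ξ u₀' u' v') :
    cNorm γ (u - u') ≤
      ‖u₀ - u₀'‖ + ε * Lf / (γ - ε * γA') * (cNorm γ (u - u') + cNorm γ (v - v')) := by
  have hM : 0 ≤ Lf * (cNorm γ (u - u') + cNorm γ (v - v')) :=
    mul_nonneg hLf (add_nonneg cNorm_nonneg cNorm_nonneg)
  refine cNorm_le fun r hr => ?_
  have hinit : exp (γ * r) * ‖mApply (expM A (ε * r)) (u₀ - u₀')‖ ≤ ‖u₀ - u₀'‖ :=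
    calc exp (γ * r) * ‖mApply (expM A (ε * r)) (u₀ - u₀')‖
        ≤ exp (γ * r) * (exp (-γA' * (ε * r)) * ‖u₀ - u₀'‖) := by
          gcongr; exact hA _ (by nlinarith) _
      _ = exp ((γ - ε * γA') * r) * ‖u₀ - u₀'‖ := by rw [← mul_assoc, ← exp_add]; ring_nf
      _ ≤ ‖u₀ - u₀'‖ := mul_le_of_le_one_left (norm_nonneg _) (exp_le_one_iff.2 (by nlinarith))
  have hforce := exp_mul_norm_smul_integral_expM_le hA hε hεγ hM hr fun s hs =>
    norm_sub_le_mul_cNorm_add (η := η) (ξ := ξ) hLf hfLip (hfix.1.sub hfix'.1)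
      (hfix.2.1.sub hfix'.2.1) hs.2
  rw [Pi.sub_apply, hfix.sub_fst_eq (continuous_uncurry_of_lipschitz hLf hfLip) hη hξ hfix' hr]
  refine (mul_le_mul_of_nonneg_left (norm_add_le _ _) (exp_pos _).le).trans ?_
  rw [mul_add]
  exact (add_le_add hinit hforce).trans_eq (by ring)

theorem IsLPFixedPt.cNorm_sub_snd_le {γB Lg : ℝ}
    (hB : ∀ t ≥ (0:ℝ), ∀ y : Vec n, ‖mApply (expM B t) y‖ ≤ exp (-γB * t) * ‖y‖)
    (hγγB : γ < γB) (hLg : 0 ≤ Lg)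
    (hgLip : ∀ x₁ y₁ x₂ y₂ : Vec n, ‖g x₁ y₁ - g x₂ y₂‖ ≤ Lg * (‖x₁ - x₂‖ + ‖y₁ - y₂‖))
    (hfix : IsLPFixedPt γ A B ε f g η ξ u₀ u v) (hfix' : IsLPFixedPt γ A B ε f g η ξ u₀' u' v') :
    cNorm γ (v - v') ≤ Lg / (γB - γ) * (cNorm γ (u - u') + cNorm γ (v - v')) := by
  refine cNorm_le fun r hr => ?_
  rw [Pi.sub_apply, hfix.sub_snd_eq hfix' hr]
  calc _ ≤ Lg * (cNorm γ (u - u') + cNorm γ (v - v')) / (γB - γ) :=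
        exp_mul_norm_integral_Iic_expM_le hB hγγB fun s hs =>
          norm_sub_le_mul_cNorm_add (η := η) (ξ := ξ) hLg hgLip (hfix.1.sub hfix'.1)
            (hfix.2.1.sub hfix'.2.1) (hs.trans hr)
    _ = _ := by ring

end FixedPoints

theorem statement6_general
    (n : ℕ)
    (A B : Matrix (Fin n) (Fin n) ℝ) (γA' γB : ℝ)
    (hA : ∀ t ≤ (0:ℝ), ∀ x : Vec n, ‖mApply (expM A t) x‖ ≤ Real.exp (-γA' * t) * ‖x‖)
    (hB : ∀ t ≥ (0:ℝ), ∀ y : Vec n, ‖mApply (expM B t) y‖ ≤ Real.exp (-γB * t) * ‖y‖)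
    (γ ε : ℝ) (hγγB : γ < γB) (hε : 0 < ε) (hεγ : ε * γA' < γ)
    (f g : Vec n → Vec n → Vec n) (Lf Lg : ℝ)
    (hLf : 0 < Lf) (hLg : 0 < Lg)
    (hfLip : ∀ x₁ y₁ x₂ y₂ : Vec n,
      ‖f x₁ y₁ - f x₂ y₂‖ ≤ Lf * (‖x₁ - x₂‖ + ‖y₁ - y₂‖))
    (hgLip : ∀ x₁ y₁ x₂ y₂ : Vec n,
      ‖g x₁ y₁ - g x₂ y₂‖ ≤ Lg * (‖x₁ - x₂‖ + ‖y₁ - y₂‖))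
    (η ξ : ℝ → Vec n) (hη : memCneg γ η) (hξ : memCneg γ ξ)
    (hρ : ε * Lf / (γ - ε * γA') + Lg / (γB - γ) < 1)
    (u₀ u₀' : Vec n) (u v u' v' : ℝ → Vec n)
    (hfix : IsLPFixedPt γ A B ε f g η ξ u₀ u v)
    (hfix' : IsLPFixedPt γ A B ε f g η ξ u₀' u' v') :
    ∀ t ≤ (0:ℝ), ∀ s ≤ (0:ℝ),
      Real.exp (γ * t) * ‖u t - u' t‖ + Real.exp (γ * s) * ‖v s - v' s‖ ≤
        ‖u₀ - u₀'‖ / (1 - (ε * Lf / (γ - ε * γA') + Lg / (γB - γ))) := by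
  intro t ht s hs
  have hu := hfix.cNorm_sub_fst_le hA hε hεγ hLf.le hfLip hη.1 hξ.1 hfix'
  have hv := hfix.cNorm_sub_snd_le hB hγγB hLg.le hgLip hfix'
  have hsum : cNorm γ (u - u') + cNorm γ (v - v') ≤
      ‖u₀ - u₀'‖ / (1 - (ε * Lf / (γ - ε * γA') + Lg / (γB - γ))) := by
    rw [le_div_iff₀ (by linarith)]
    linarith
  have hut : exp (γ * t) * ‖u t - u' t‖ ≤ cNorm γ (u - u') := le_cNorm (hfix.1.sub hfix'.1) ht
  have hvs : exp (γ * s) * ‖v s - v' s‖ ≤ cNorm γ (v - v') := le_cNorm (hfix.2.1.sub hfix'.2.1) hs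
  linarith

/-- Lipschitz dependence of the fixed point on the initial value:
`‖Φ^ε(⋅;u₀) − Φ^ε(⋅;u₀′)‖_γ^- ≤ |u₀ − u₀′| / (1 − ρ(ε))`. -/
theorem statement6
    (n : ℕ) (hn : 0 < n)
    (A B : Matrix (Fin n) (Fin n) ℝ) (γA' γB : ℝ) (hγA' : 0 < γA') (hγB : 0 < γB)
    (hA : ∀ t ≤ (0:ℝ), ∀ x : Vec n, ‖mApply (expM A t) x‖ ≤ Real.exp (-γA' * t) * ‖x‖)
    (hB : ∀ t ≥ (0:ℝ), ∀ y : Vec n, ‖mApply (expM B t) y‖ ≤ Real.exp (-γB * t) * ‖y‖)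
    (γ ε : ℝ) (hγ : 0 < γ) (hγγB : γ < γB) (hε : 0 < ε) (hεγ : ε * γA' < γ)
    (f g : Vec n → Vec n → Vec n) (Lf Lg Cf Cg : ℝ)
    (hLf : 0 < Lf) (hLg : 0 < Lg) (hCf : 0 < Cf) (hCg : 0 < Cg)
    (hfLip : ∀ x₁ y₁ x₂ y₂ : Vec n,
      ‖f x₁ y₁ - f x₂ y₂‖ ≤ Lf * (‖x₁ - x₂‖ + ‖y₁ - y₂‖))
    (hgLip : ∀ x₁ y₁ x₂ y₂ : Vec n,
      ‖g x₁ y₁ - g x₂ y₂‖ ≤ Lg * (‖x₁ - x₂‖ + ‖y₁ - y₂‖))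
    (hfGrow : ∀ x y : Vec n, ‖f x y‖ ≤ Lf * (Cf + ‖x‖ + ‖y‖))
    (hgGrow : ∀ x y : Vec n, ‖g x y‖ ≤ Lg * (Cg + ‖x‖ + ‖y‖))
    (η ξ : ℝ → Vec n) (hη : memCneg γ η) (hξ : memCneg γ ξ)
    (hρ : ε * Lf / (γ - ε * γA') + Lg / (γB - γ) < 1)
    (u₀ u₀' : Vec n) (u v u' v' : ℝ → Vec n)
    (hfix : IsLPFixedPt γ A B ε f g η ξ u₀ u v)
    (hfix' : IsLPFixedPt γ A B ε f g η ξ u₀' u' v') :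
    ∀ t ≤ (0:ℝ), ∀ s ≤ (0:ℝ),
      Real.exp (γ * t) * ‖u t - u' t‖ + Real.exp (γ * s) * ‖v s - v' s‖ ≤
        ‖u₀ - u₀'‖ / (1 - (ε * Lf / (γ - ε * γA') + Lg / (γB - γ))) :=
  statement6_general n A B γA' γB hA hB γ ε hγγB hε hεγ f g Lf Lg hLf hLg hfLip hgLip η ξ hη hξ hρ
    u₀ u₀' u v u' v' hfix hfix'
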